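/- Let φ : ℂ → ℝ be subharmonic (radial, twice continuously differentiable), and let τ : ℂ → (0,∞) satisfy |τ(z) − τ(ζ)| ≤ c₁|z − ζ| for all z, ζ ∈ ℂ and τ(z)² Δφ(z) ≤ c₂ for all |z| ≥ 1, where c₁, c₂ > 0. Set m_τ = min(1, c₁^{−1})/4. Then for every β ∈ ℝ and 0 < p < ∞ there exists a constant M ≥ 1 such that for all 0 < δ ≤ m_τ, all a ∈ ℂ, and every entire function f: |f(a)|^p e^{−βφ(a)} ≤ (M/(δ²τ(a)²)) ∫_{D(a,δτ(a))} |f(z)|^p e^{−βφ(z)} dm(z). -/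

import Mathlib

open MeasureTheory Filter Metric
open scoped ENNReal

noncomputable section

/-- The Laplacian of a radial function `z ↦ φ (|z|)`, expressed in the radius `r`. -/
def lapR (φ : ℝ → ℝ) (r : ℝ) : ℝ := deriv (deriv φ) r + deriv φ r / r

/-- The quantity `∫_ℂ |f(z)|^p e^{-p φ(|z|)} dm(z)`, as a lower Lebesgue integral. -/
def fockLInt (φ : ℝ → ℝ) (p : ℝ) (f : ℂ → ℂ) : ℝ≥0∞ :=
  ∫⁻ z : ℂ, ENNReal.ofReal (‖f z‖ ^ p * Real.exp (-(p * φ (‖z‖))))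

/-- Membership in the weighted Fock space `F^φ_p`: `f` is entire and has finite `F^φ_p` norm. -/
def MemFock (φ : ℝ → ℝ) (p : ℝ) (f : ℂ → ℂ) : Prop :=
  Differentiable ℂ f ∧ fockLInt φ p f < ⊤

/-- The class `𝓘` of rapidly increasing radial weights `φ`, with associated function `τ`. -/
structure ClassI (φ τ : ℝ → ℝ) : Prop where
  φ_pos : ∀ r, 0 ≤ r → 0 < φ r
  φ_smooth : ContDiff ℝ 2 φ
  lap_pos : ∀ r, 0 < r → 0 < lapR φ r
  τ_pos : ∀ r, 0 ≤ r → 0 < τ r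
  τ_diff : Differentiable ℝ τ
  τ_anti : ∀ r s, 0 ≤ r → r ≤ s → τ s ≤ τ r
  τ_lim : Tendsto τ atTop (nhds 0)
  τ_deriv_lim : Tendsto (deriv τ) atTop (nhds 0)
  τ_one : ∃ c, 0 < c ∧ ∀ r, 0 ≤ r → r < 1 → c⁻¹ ≤ τ r ∧ τ r ≤ c
  τ_lap : ∃ c, 0 < c ∧ ∀ r, 1 ≤ r → c⁻¹ ≤ τ r ^ 2 * lapR φ r ∧ τ r ^ 2 * lapR φ r ≤ c
  extra : (∃ C, 0 < C ∧ ∃ R : ℝ, ∀ r s, R ≤ r → r ≤ s → τ r * r ^ C ≤ τ s * s ^ C) ∨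
      Tendsto (fun r => deriv τ r * Real.log (1 / τ r)) atTop (nhds 0)

/-- The integral operator `T_g f (z) = ∫_0^z f(ζ) g'(ζ) dζ` (integral along the segment). -/
def Tg (g f : ℂ → ℂ) (z : ℂ) : ℂ := z * ∫ t in (0:ℝ)..1, f (t • z) * deriv g (t • z)

/-- The integral mean `M_q(r,f)` (with `M_∞(r,f) = max_{|z|=r} |f(z)|`). -/
def circMean (q : ℝ≥0∞) (f : ℂ → ℂ) (r : ℝ) : ℝ :=
  if q = ⊤ then ⨆ t : ℝ, ‖f ((r : ℂ) * Complex.exp ((t : ℂ) * Complex.I))‖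
  else ((2 * Real.pi)⁻¹ * ∫ t in (-Real.pi)..Real.pi,
      ‖f ((r : ℂ) * Complex.exp ((t : ℂ) * Complex.I))‖ ^ q.toReal) ^ (1 / q.toReal)

/-- The `p`-distortion function `ψ_{p,φ}(r) = (∫_r^∞ s e^{-pφ(s)} ds) / ((1+r) e^{-pφ(r)})`. -/
def distortion (φ : ℝ → ℝ) (p r : ℝ) : ℝ :=
  (∫ s in Set.Ioi r, s * Real.exp (-(p * φ s))) / ((1 + r) * Real.exp (-(p * φ r)))

/-!
Multiplying `f` by `exp (-(β / p) g)` for a holomorphic `g` with `Re g ≈ φ(|z|)` turns the weighted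
estimate into the plain sub-mean value inequality `|F(a)|^p ≤ C R⁻² ∫_{D(a,R)} |F|^p` for
holomorphic `F`, at the cost of a factor `e^{|β| C₀}`, where `C₀` bounds `|φ(|z|) - Re g(z)|` on
the disc `D(a, R)`, `R = δ τ(a)`.

Such a `g` exists with `C₀` independent of `a` and `δ`: near the origin a constant works, while far
out `φ(|a|) + |a| φ'(|a|) log |z/a|` agrees with `φ(|z|)` to first order at `|z| = |a|`; the error
is `O(R² Δφ) = O(δ² τ(a)² Δφ)`, which is bounded because `τ` is Lipschitz, so `τ ≍ τ(a)` on the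
disc, and `τ² Δφ ≤ c₂`.

The sub-mean value inequality is the area mean value inequality for `p = 1`. For `p < 1`, maximize
`(R - |z - a|)² |F(z)|^p` over the closed disc and apply the case `p = 1` on the disc of half the
distance to the boundary around a maximizer: on that disc `|F|` is controlled by its value at the
maximizer, so `|F| ≤ |F|^p · (max |F|)^{1-p}` can be absorbed. General `p` reduces to `p / m ≤ 1` by
passing to `F^m`.
-/

section

open Real

theorem ContinuousOn.integrableOn_ball {g : ℂ → ℝ} {a : ℂ} {R : ℝ}
    (hg : ContinuousOn g (closedBall a R)) : IntegrableOn g (ball a R) :=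
  (hg.integrableOn_compact (isCompact_closedBall a R)).mono_set ball_subset_closedBall

theorem integral_ball_eq_integral_circleAverage {g : ℂ → ℝ} {a : ℂ} {R : ℝ} (hR : 0 ≤ R)
    (hg : ContinuousOn g (closedBall a R)) :
    ∫ z in ball a R, g z = ∫ r in 0..R, 2 * π * r * circleAverage g a r := by
  set T := Set.Ioo 0 R ×ˢ Set.Ioo (-π) π
  set G : ℝ × ℝ → ℝ := fun q => q.1 * g (circleMap a q.1 q.2)
  have hpolar : ∫ z in ball a R, g z = ∫ q in T, G q := by
    have hsymm (q : ℝ × ℝ) : a + Complex.polarCoord.symm q = circleMap a q.1 q.2 := by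
      simp [circleMap, Complex.exp_mul_I]
    rw [← integral_indicator measurableSet_ball,
      ← integral_add_left_eq_self (fun w => (ball a R).indicator g w) a,
      ← Complex.integral_comp_polarCoord_symm,
      ← integral_indicator polarCoord.open_target.measurableSet,
      ← integral_indicator (measurableSet_Ioo.prod measurableSet_Ioo)]
    classical
    congr 1
    ext ⟨r, θ⟩
    by_cases hr : 0 < r
    · simp only [hsymm]
      by_cases hrR : r < R <;>
        simp [Set.indicator_apply, dist_eq_norm, circleMap_sub_center, abs_of_pos hr, hr, hrR, G]
    · simp [Set.indicator_apply, hr, G]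
  have hGint : IntegrableOn G T := by
    refine (ContinuousOn.integrableOn_compact (isCompact_Icc.prod isCompact_Icc) ?_).mono_set
      (Set.prod_mono Set.Ioo_subset_Icc_self Set.Ioo_subset_Icc_self)
    refine continuousOn_fst.mul (hg.comp (by fun_prop) fun q hq => ?_)
    simp [dist_eq_norm, circleMap_sub_center, abs_of_nonneg hq.1.1, hq.1.2]
  have hinner (r : ℝ) : ∫ θ in Set.Ioo (-π) π, G (r, θ) = 2 * π * r * circleAverage g a r := by
    rw [circleAverage_eq_integral_add (-π),
      intervalIntegral.integral_comp_add_right (fun θ => g (circleMap a r θ)), integral_const_mul,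
      ← integral_Ioc_eq_integral_Ioo, ← intervalIntegral.integral_of_le (by linarith [pi_pos])]
    simp only [smul_eq_mul, zero_add, show 2 * π + -π = π by ring]
    field_simp
  rw [hpolar, Measure.volume_eq_prod, setIntegral_prod G (by rwa [← Measure.volume_eq_prod]),
    intervalIntegral.integral_of_le hR, integral_Ioc_eq_integral_Ioo]
  simp only [hinner]

theorem DiffContOnCl.norm_le_circleAverage_norm {f : ℂ → ℂ} {c : ℂ} {R : ℝ}
    (hf : DiffContOnCl ℂ f (ball c |R|)) : ‖f c‖ ≤ Real.circleAverage (‖f ·‖) c R := by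
  rw [← hf.circleAverage, circleAverage_def, circleAverage_def, norm_smul, smul_eq_mul,
    norm_of_nonneg (by positivity)]
  gcongr
  exact intervalIntegral.norm_integral_le_integral_norm (by positivity)

theorem DiffContOnCl.pi_mul_sq_mul_norm_le_integral_norm {f : ℂ → ℂ} {a : ℂ} {R : ℝ}
    (hR : 0 ≤ R) (hf : DiffContOnCl ℂ f (ball a R)) :
    π * R ^ 2 * ‖f a‖ ≤ ∫ z in ball a R, ‖f z‖ := by
  have hcont : ContinuousOn (‖f ·‖) (closedBall a R) := hf.continuousOn_ball.norm
  have hmean : ContinuousOn (Real.circleAverage (‖f ·‖) a) (Set.uIcc 0 R) := by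
    rw [Set.uIcc_of_le hR]
    refine (hcont.mono fun z hz => ?_).circleAverage fun r hr => hr.1
    simpa [dist_eq_norm] using hz.2
  have hlin : Continuous fun r : ℝ => 2 * π * r * ‖f a‖ := by fun_prop
  rw [integral_ball_eq_integral_circleAverage hR hcont]
  calc π * R ^ 2 * ‖f a‖ = ∫ r in 0..R, 2 * π * r * ‖f a‖ := by
        rw [intervalIntegral.integral_mul_const, intervalIntegral.integral_const_mul, integral_id]
        ring
    _ ≤ ∫ r in 0..R, 2 * π * r * Real.circleAverage (‖f ·‖) a r := by
        refine intervalIntegral.integral_mono_on hR (hlin.intervalIntegrable _ _)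
          ((continuousOn_const.mul continuousOn_id).mul hmean).intervalIntegrable fun r hr => ?_
        gcongr
        · exact mul_nonneg (by positivity) hr.1
        · exact (hf.mono (ball_subset_ball ((abs_of_nonneg hr.1).le.trans hr.2))
            ).norm_le_circleAverage_norm

theorem le_rpow_one_sub_mul_rpow {x M p : ℝ} (hx : 0 ≤ x) (hxM : x ≤ M) (hp1 : p ≤ 1) :
    x ≤ M ^ (1 - p) * x ^ p := by
  calc x = x ^ (1 - p) * x ^ p := by
        rw [← rpow_add' hx (by norm_num), sub_add_cancel, rpow_one]
    _ ≤ M ^ (1 - p) * x ^ p := by gcongr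

theorem DiffContOnCl.pi_mul_sq_mul_norm_le_rpow_mul_integral {f : ℂ → ℂ} {a : ℂ} {R M p : ℝ}
    (hR : 0 ≤ R) (hp : 0 ≤ p) (hp1 : p ≤ 1) (hf : DiffContOnCl ℂ f (ball a R))
    (hM : ∀ z ∈ ball a R, ‖f z‖ ≤ M) :
    π * R ^ 2 * ‖f a‖ ≤ M ^ (1 - p) * ∫ z in ball a R, ‖f z‖ ^ p := by
  rw [← integral_const_mul]
  exact (hf.pi_mul_sq_mul_norm_le_integral_norm hR).trans <|
    setIntegral_mono_on hf.continuousOn_ball.norm.integrableOn_ball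
      ((hf.continuousOn_ball.norm.rpow_const fun _ _ => Or.inr hp).integrableOn_ball.const_mul _)
      measurableSet_ball fun z hz => le_rpow_one_sub_mul_rpow (norm_nonneg _) (hM z hz) hp1

theorem le_four_mul_of_isMaxOn_sq_mul {X : Type*} [PseudoMetricSpace X] {h : X → ℝ}
    {a z₀ w : X} {R : ℝ} (hmax : IsMaxOn (fun z => (R - dist z a) ^ 2 * h z) (closedBall a R) z₀)
    (hw : w ∈ ball z₀ ((R - dist z₀ a) / 2)) (hhw : 0 ≤ h w) : h w ≤ 4 * h z₀ := by
  have hdw : (R - dist z₀ a) / 2 ≤ R - dist w a := by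
    rw [mem_ball] at hw; linarith [dist_triangle w z₀ a]
  have hd : 0 < (R - dist z₀ a) / 2 := dist_nonneg.trans_lt (mem_ball.1 hw)
  refine le_of_mul_le_mul_left ?_ (pow_pos hd 2)
  calc ((R - dist z₀ a) / 2) ^ 2 * h w ≤ (R - dist w a) ^ 2 * h w := by gcongr
    _ ≤ (R - dist z₀ a) ^ 2 * h z₀ := hmax (mem_closedBall.2 (by linarith))
    _ = ((R - dist z₀ a) / 2) ^ 2 * (4 * h z₀) := by ring

theorem DiffContOnCl.sq_mul_norm_rpow_le_of_isMaxOn {f : ℂ → ℂ} {a z₀ : ℂ} {R p : ℝ}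
    (hp : 0 < p) (hp1 : p ≤ 1) (hf : DiffContOnCl ℂ f (ball a R)) (hz₀ : z₀ ∈ closedBall a R)
    (hmax : IsMaxOn (fun z => (R - dist z a) ^ 2 * ‖f z‖ ^ p) (closedBall a R) z₀) :
    (R - dist z₀ a) ^ 2 * ‖f z₀‖ ^ p ≤ 4 ^ p⁻¹ / π * ∫ z in ball a R, ‖f z‖ ^ p := by
  set I := ∫ z in ball a R, ‖f z‖ ^ p
  set d := R - dist z₀ a
  set F := ‖f z₀‖
  have hI : 0 ≤ I := setIntegral_nonneg measurableSet_ball fun z _ => by positivity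
  rcases (show 0 ≤ d ^ 2 * F ^ p by positivity).eq_or_lt with h0 | hpos
  · rw [← h0]; positivity
  have hd : 0 < d := lt_of_le_of_ne (sub_nonneg.2 (mem_closedBall.1 hz₀)) (by
    rintro h; simp [← h] at hpos)
  have hF : 0 < F := lt_of_le_of_ne (norm_nonneg _) (by
    rintro h; simp [← h, zero_rpow hp.ne'] at hpos)
  have hsub : ball z₀ (d / 2) ⊆ ball a R := fun w hw => by
    rw [mem_ball] at hw ⊢; linarith [dist_triangle w z₀ a]
  have hball : ∀ w ∈ ball z₀ (d / 2), ‖f w‖ ≤ 4 ^ p⁻¹ * F := fun w hw => by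
    rw [← rpow_le_rpow_iff (norm_nonneg _) (by positivity) hp, mul_rpow (by positivity) hF.le,
      ← rpow_mul (by norm_num), inv_mul_cancel₀ hp.ne', rpow_one]
    exact le_four_mul_of_isMaxOn_sq_mul hmax hw (by positivity)
  have harea : π * (d / 2) ^ 2 * F ≤ (4 ^ p⁻¹ * F) ^ (1 - p) * I := by
    refine ((hf.mono hsub).pi_mul_sq_mul_norm_le_rpow_mul_integral (by positivity) hp.le hp1
      hball).trans ?_
    gcongr
    exact setIntegral_mono_set
      (hf.continuousOn_ball.norm.rpow_const fun _ _ => Or.inr hp.le).integrableOn_ball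
      (Eventually.of_forall fun _ => by positivity) hsub.eventuallyLE
  have h4 : (4 ^ p⁻¹ * F) ^ (1 - p) = 4 ^ p⁻¹ / 4 * F ^ (1 - p) := by
    rw [mul_rpow (by positivity) hF.le, ← rpow_mul (by norm_num), mul_one_sub,
      inv_mul_cancel₀ hp.ne', rpow_sub_one (by norm_num)]
  have hFsplit : F ^ p * F ^ (1 - p) = F := by
    rw [← rpow_add hF, add_sub_cancel, rpow_one]
  have key : π * d ^ 2 * F ^ p * F ^ (1 - p) ≤ 4 ^ p⁻¹ * I * F ^ (1 - p) :=
    calc π * d ^ 2 * F ^ p * F ^ (1 - p) = 4 * (π * (d / 2) ^ 2 * F) := by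
          rw [mul_assoc _ (F ^ p), hFsplit]; ring
      _ ≤ 4 * ((4 ^ p⁻¹ * F) ^ (1 - p) * I) := by gcongr
      _ = 4 ^ p⁻¹ * I * F ^ (1 - p) := by rw [h4]; ring
  rw [div_mul_eq_mul_div, le_div_iff₀ pi_pos]
  linarith [le_of_mul_le_mul_right key (by positivity)]

theorem DiffContOnCl.norm_rpow_le_integral_of_le_one {f : ℂ → ℂ} {a : ℂ} {R p : ℝ}
    (hR : 0 < R) (hp : 0 < p) (hp1 : p ≤ 1) (hf : DiffContOnCl ℂ f (ball a R)) :
    ‖f a‖ ^ p ≤ 4 ^ p⁻¹ / (π * R ^ 2) * ∫ z in ball a R, ‖f z‖ ^ p := by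
  have hcont : ContinuousOn (fun z => (R - dist z a) ^ 2 * ‖f z‖ ^ p) (closedBall a R) :=
    ((continuous_const.sub (continuous_id.dist continuous_const)).pow 2).continuousOn.mul
      (hf.continuousOn_ball.norm.rpow_const fun _ _ => Or.inr hp.le)
  obtain ⟨z₀, hz₀, hmax⟩ :=
    (isCompact_closedBall a R).exists_isMaxOn (nonempty_closedBall.2 hR.le) hcont
  have hka : (R - dist a a) ^ 2 * ‖f a‖ ^ p ≤ _ := (hmax (mem_closedBall_self hR.le)).trans
    (hf.sq_mul_norm_rpow_le_of_isMaxOn hp hp1 hz₀ hmax)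
  rw [dist_self, sub_zero, div_mul_eq_mul_div, le_div_iff₀ pi_pos] at hka
  rw [div_mul_eq_mul_div, le_div_iff₀ (by positivity)]
  linarith

theorem DiffContOnCl.norm_rpow_le_integral {f : ℂ → ℂ} {a : ℂ} {R p : ℝ}
    (hR : 0 < R) (hp : 0 < p) (hf : DiffContOnCl ℂ f (ball a R)) :
    ‖f a‖ ^ p ≤ 4 ^ (⌈p⌉₊ / p) / (π * R ^ 2) * ∫ z in ball a R, ‖f z‖ ^ p := by
  set m := ⌈p⌉₊
  have hm : 0 < (m : ℝ) := Nat.cast_pos.2 (Nat.ceil_pos.2 hp)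
  have hpow (z : ℂ) : ‖f z ^ m‖ ^ (p / m) = ‖f z‖ ^ p := by
    rw [norm_pow, ← rpow_natCast, ← rpow_mul (norm_nonneg _), mul_div_cancel₀ _ hm.ne']
  have := ((differentiable_pow m).comp_diffContOnCl hf).norm_rpow_le_integral_of_le_one hR
    (div_pos hp hm) ((div_le_one hm).2 (Nat.le_ceil p))
  simpa only [Function.comp_apply, hpow, inv_div] using this

theorem DiffContOnCl.norm_rpow_mul_exp_le_integral {f g : ℂ → ℂ} {ψ : ℂ → ℝ} {a : ℂ}
    {R p β C₀ : ℝ} (hR : 0 < R) (hp : 0 < p) (hf : DiffContOnCl ℂ f (ball a R))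
    (hg : DiffContOnCl ℂ g (ball a R)) (hψ : ContinuousOn ψ (closedBall a R))
    (hga : (g a).re = ψ a) (hgψ : ∀ z ∈ ball a R, |ψ z - (g z).re| ≤ C₀) :
    ‖f a‖ ^ p * exp (-(β * ψ a)) ≤ 4 ^ (⌈p⌉₊ / p) / (π * R ^ 2) * exp (|β| * C₀) *
      ∫ z in ball a R, ‖f z‖ ^ p * exp (-(β * ψ z)) := by
  set F : ℂ → ℂ := fun z => f z * Complex.exp (-((β / p : ℝ) * g z))
  have hexp : DiffContOnCl ℂ (fun z => Complex.exp (-((β / p : ℝ) * g z))) (ball a R) :=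
    Complex.differentiable_exp.comp_diffContOnCl (hg.const_smul ((β / p : ℝ) : ℂ)).neg
  have hF : DiffContOnCl ℂ F (ball a R) := hf.smul hexp
  have hnormF (z : ℂ) : ‖F z‖ ^ p = ‖f z‖ ^ p * exp (-(β * (g z).re)) := by
    rw [norm_mul, Complex.norm_exp, mul_rpow (norm_nonneg _) (exp_pos _).le, ← exp_mul]
    congr 2
    simp only [Complex.neg_re, Complex.re_ofReal_mul]
    field_simp
  have hcont : ContinuousOn (fun z => ‖f z‖ ^ p * exp (-(β * ψ z))) (closedBall a R) :=
    (hf.continuousOn_ball.norm.rpow_const fun _ _ => Or.inr hp.le).mul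
      (hψ.const_smul β).neg.rexp
  have hcomp : ∀ z ∈ ball a R,
      ‖F z‖ ^ p ≤ exp (|β| * C₀) * (‖f z‖ ^ p * exp (-(β * ψ z))) := fun z hz => by
    rw [hnormF, mul_left_comm, ← exp_add]
    gcongr
    nlinarith [abs_le.1 (hgψ z hz), abs_mul_abs_self β, neg_abs_le β, le_abs_self β, abs_nonneg β]
  calc ‖f a‖ ^ p * exp (-(β * ψ a)) = ‖F a‖ ^ p := by rw [hnormF, hga]
    _ ≤ 4 ^ (⌈p⌉₊ / p) / (π * R ^ 2) * ∫ z in ball a R, ‖F z‖ ^ p :=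
        hF.norm_rpow_le_integral hR hp
    _ ≤ 4 ^ (⌈p⌉₊ / p) / (π * R ^ 2) *
          ∫ z in ball a R, exp (|β| * C₀) * (‖f z‖ ^ p * exp (-(β * ψ z))) := by
        refine mul_le_mul_of_nonneg_left (setIntegral_mono_on ?_
          (hcont.integrableOn_ball.const_mul _) measurableSet_ball hcomp) (by positivity)
        exact (hF.continuousOn_ball.norm.rpow_const fun _ _ => Or.inr hp.le).integrableOn_ball
    _ = _ := by rw [integral_const_mul, mul_assoc]

theorem hasDerivAt_mul_deriv {φ : ℝ → ℝ} (hφ : ContDiff ℝ 2 φ) {u : ℝ} (hu : u ≠ 0) :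
    HasDerivAt (fun v => v * deriv φ v) (u * lapR φ u) u := by
  have hφ' : Differentiable ℝ (deriv φ) :=
    ((contDiff_succ_iff_deriv (n := 1)).1 hφ).2.2.differentiable one_ne_zero
  refine (hasDerivAt_id' u |>.mul (hφ' u).hasDerivAt).congr_deriv ?_
  simp only [lapR]
  field_simp
  ring

theorem abs_sub_sub_mul_log_le {φ : ℝ → ℝ} (hφ : ContDiff ℝ 2 φ) {r₀ R Λ : ℝ} (hR : R < r₀)
    (hlap : ∀ u ∈ Set.Icc (r₀ - R) (r₀ + R), |lapR φ u| ≤ Λ) {x : ℝ}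
    (hx : x ∈ Set.Icc (r₀ - R) (r₀ + R)) :
    |φ x - φ r₀ - r₀ * deriv φ r₀ * (log x - log r₀)| ≤
      R ^ 2 * (r₀ + R) * Λ / (r₀ - R) := by
  set s := Set.Icc (r₀ - R) (r₀ + R)
  have hpos : ∀ u ∈ s, 0 < u := fun u hu => by linarith [hu.1]
  have hr₀ : r₀ ∈ s := ⟨by linarith [hx.1, hx.2], by linarith [hx.1, hx.2]⟩
  have hdist : ∀ u ∈ s, ‖u - r₀‖ ≤ R := fun u hu => by
    rw [norm_eq_abs, abs_le]; constructor <;> linarith [hu.1, hu.2]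
  have hΛ : 0 ≤ Λ := (abs_nonneg _).trans (hlap x hx)
  have hR0 : 0 ≤ R := by linarith [hx.1, hx.2]
  have hr₀R : 0 < r₀ - R := by linarith
  have hsum : 0 ≤ r₀ + R := by linarith
  have hC : 0 ≤ (r₀ + R) * Λ * R := by positivity
  have hψ : ∀ u ∈ s, ‖u * deriv φ u - r₀ * deriv φ r₀‖ ≤ (r₀ + R) * Λ * R := fun u hu => by
    refine (Convex.norm_image_sub_le_of_norm_hasDerivWithin_le
      (fun v hv => (hasDerivAt_mul_deriv hφ (hpos v hv).ne').hasDerivWithinAt) (fun v hv => ?_)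
      (convex_Icc _ _) hr₀ hu).trans (mul_le_mul_of_nonneg_left (hdist u hu) (by positivity))
    rw [norm_mul, norm_of_nonneg (hpos v hv).le]
    exact mul_le_mul hv.2 (hlap v hv) (norm_nonneg _) (by positivity)
  have hE : ∀ u ∈ s, HasDerivWithinAt (fun v => φ v - r₀ * deriv φ r₀ * log v)
      ((u * deriv φ u - r₀ * deriv φ r₀) / u) s u := fun u hu => by
    have hφd : Differentiable ℝ φ := hφ.differentiable (by norm_num)
    refine ((hφd u).hasDerivAt.sub ((hasDerivAt_log (hpos u hu).ne').const_mul
      (r₀ * deriv φ r₀))).hasDerivWithinAt.congr_deriv ?_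
    field_simp [(hpos u hu).ne']
  have hE' : ∀ u ∈ s, ‖(u * deriv φ u - r₀ * deriv φ r₀) / u‖ ≤ (r₀ + R) * Λ * R / (r₀ - R) :=
    fun u hu => by
      rw [norm_div, norm_of_nonneg (hpos u hu).le]
      exact div_le_div₀ hC (hψ u hu) (by linarith) hu.1
  calc |φ x - φ r₀ - r₀ * deriv φ r₀ * (log x - log r₀)|
      = ‖(φ x - r₀ * deriv φ r₀ * log x) - (φ r₀ - r₀ * deriv φ r₀ * log r₀)‖ := by
        rw [norm_eq_abs]; ring_nf
    _ ≤ (r₀ + R) * Λ * R / (r₀ - R) * R :=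
        (Convex.norm_image_sub_le_of_norm_hasDerivWithin_le hE hE' (convex_Icc _ _) hr₀ hx).trans
          (mul_le_mul_of_nonneg_left (hdist x hx) (by positivity))
    _ = R ^ 2 * (r₀ + R) * Λ / (r₀ - R) := by ring

/-- The real part `φ(|a|) + |a| φ'(|a|) log |z/a|` is the radial harmonic function matching
`φ(|z|)` to first order at `|z| = |a|`. -/
def radialLogApprox (φ : ℝ → ℝ) (a z : ℂ) : ℂ :=
  φ ‖a‖ + ((‖a‖ * deriv φ ‖a‖ : ℝ) : ℂ) * Complex.log (z / a)

theorem differentiableOn_radialLogApprox (φ : ℝ → ℝ) (a : ℂ) :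
    DifferentiableOn ℂ (radialLogApprox φ a) (ball a ‖a‖) := by
  intro z hz
  have ha : a ≠ 0 := by rintro rfl; simp at hz
  have hslit : z / a ∈ Complex.slitPlane := by
    rw [show z / a = 1 + (z - a) / a by field_simp; ring]
    apply Complex.mem_slitPlane_of_norm_lt_one
    rw [norm_div, div_lt_one (norm_pos_iff.2 ha), ← dist_eq_norm]
    exact hz
  exact ((Complex.differentiableAt_log hslit).comp z (differentiableAt_id.div_const a)
    |>.const_mul _ |>.const_add _).differentiableWithinAt

theorem radialLogApprox_self_re (φ : ℝ → ℝ) (a : ℂ) : (radialLogApprox φ a a).re = φ ‖a‖ := by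
  rcases eq_or_ne a 0 with rfl | ha <;> simp [radialLogApprox, *]

theorem radialLogApprox_re {φ : ℝ → ℝ} {a z : ℂ} (ha : a ≠ 0) (hz : z ≠ 0) :
    (radialLogApprox φ a z).re = φ ‖a‖ + ‖a‖ * deriv φ ‖a‖ * (log ‖z‖ - log ‖a‖) := by
  simp [radialLogApprox, Complex.log_re, log_div (norm_ne_zero_iff.2 hz) (norm_ne_zero_iff.2 ha)]

theorem abs_sub_radialLogApprox_re_le {φ : ℝ → ℝ} (hφ : ContDiff ℝ 2 φ) {a : ℂ} {R Λ : ℝ}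
    (hR : R < ‖a‖) (hlap : ∀ u ∈ Set.Icc (‖a‖ - R) (‖a‖ + R), |lapR φ u| ≤ Λ) {z : ℂ}
    (hz : z ∈ closedBall a R) :
    |φ ‖z‖ - (radialLogApprox φ a z).re| ≤ R ^ 2 * (‖a‖ + R) * Λ / (‖a‖ - R) := by
  have hzn : ‖z‖ ∈ Set.Icc (‖a‖ - R) (‖a‖ + R) := by
    have := abs_norm_sub_norm_le z a
    rw [← dist_eq_norm] at this
    constructor <;> linarith [abs_le.1 (this.trans (mem_closedBall.1 hz))]
  have ha : a ≠ 0 := by rintro rfl; linarith [hzn.2, norm_nonneg z, norm_zero (E := ℂ)]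
  have hz0 : z ≠ 0 := by rintro rfl; simp at hzn; linarith [hzn.1]
  rw [radialLogApprox_re ha hz0, ← sub_sub]
  exact abs_sub_sub_mul_log_le hφ hR hlap hzn

theorem exists_norm_eq_norm_sub_eq {a : ℂ} (ha : a ≠ 0) {u : ℝ} (hu : 0 ≤ u) :
    ∃ z : ℂ, ‖z‖ = u ∧ ‖z - a‖ = |u - ‖a‖| := by
  have ha' : 0 < ‖a‖ := norm_pos_iff.2 ha
  refine ⟨((u / ‖a‖ : ℝ) : ℂ) * a, ?_, ?_⟩
  · rw [norm_mul, Complex.norm_real, norm_of_nonneg (by positivity), div_mul_cancel₀ _ ha'.ne']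
  · have : (‖a‖ : ℂ) ≠ 0 := by exact_mod_cast ha'.ne'
    rw [show ((u / ‖a‖ : ℝ) : ℂ) * a - a = (((u - ‖a‖) / ‖a‖ : ℝ) : ℂ) * a by push_cast; field_simp,
      norm_mul, Complex.norm_real, norm_eq_abs, abs_div, abs_norm, div_mul_cancel₀ _ ha'.ne']

theorem nine_mul_sq_mul_lapR_le {φ : ℝ → ℝ} {τ : ℂ → ℝ} {c₁ c₂ : ℝ}
    (hlip : ∀ z ζ : ℂ, |τ z - τ ζ| ≤ c₁ * ‖z - ζ‖)
    (hbd : ∀ z : ℂ, 1 ≤ ‖z‖ → τ z ^ 2 * lapR φ ‖z‖ ≤ c₂)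
    {a : ℂ} (ha : a ≠ 0) (hτa : 0 ≤ τ a) {ρ u : ℝ} (hρ : 4 * c₁ * ρ ≤ τ a) (hu1 : 1 ≤ u)
    (hu : |u - ‖a‖| ≤ ρ) (hlap : 0 ≤ lapR φ u) :
    9 * τ a ^ 2 * lapR φ u ≤ 16 * c₂ := by
  have hc₁ : 0 ≤ c₁ := by simpa using (abs_nonneg _).trans (hlip 1 0)
  obtain ⟨z, hzu, hza⟩ := exists_norm_eq_norm_sub_eq ha (zero_le_one.trans hu1)
  have hτz : 3 * τ a ≤ 4 * τ z := by
    have := (abs_le.1 (hlip z a)).1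
    nlinarith [mul_le_mul_of_nonneg_left (hza.trans_le hu) hc₁]
  have hz := hbd z (hzu ▸ hu1)
  rw [hzu] at hz
  nlinarith [mul_le_mul_of_nonneg_right (pow_le_pow_left₀ (by positivity) hτz 2) hlap]

theorem abs_sub_radialLogApprox_re_le_of_lipschitz {φ : ℝ → ℝ} (hφ : ContDiff ℝ 2 φ)
    (hsub : ∀ r : ℝ, 0 < r → 0 ≤ lapR φ r) {τ : ℂ → ℝ} {c₁ c₂ : ℝ}
    (hlip : ∀ z ζ : ℂ, |τ z - τ ζ| ≤ c₁ * ‖z - ζ‖)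
    (hbd : ∀ z : ℂ, 1 ≤ ‖z‖ → τ z ^ 2 * lapR φ ‖z‖ ≤ c₂) {a : ℂ} {δ : ℝ} (hδ : 0 ≤ δ)
    (hδ4 : δ ≤ 1 / 4) (hδc : 4 * c₁ * δ ≤ 1) (hτa : 0 < τ a) (h1R : 1 ≤ ‖a‖ - δ * τ a)
    (hR2 : δ * τ a ≤ ‖a‖ / 2) {z : ℂ} (hz : z ∈ closedBall a (δ * τ a)) :
    |φ ‖z‖ - (radialLogApprox φ a z).re| ≤ c₂ := by
  set R := δ * τ a
  have hR : 0 ≤ R := by positivity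
  have ha : a ≠ 0 := by rintro rfl; simp at h1R; linarith
  have hc₂ : 0 ≤ c₂ :=
    (mul_nonneg (sq_nonneg _) (hsub ‖a‖ (by linarith))).trans (hbd a (by linarith))
  set Λ := 16 * c₂ / (9 * τ a ^ 2)
  have hlap : ∀ u ∈ Set.Icc (‖a‖ - R) (‖a‖ + R), |lapR φ u| ≤ Λ := fun u hu => by
    have hlap0 := hsub u (by linarith [hu.1])
    rw [abs_of_nonneg hlap0, le_div_iff₀ (by positivity)]
    have := nine_mul_sq_mul_lapR_le hlip hbd ha hτa.le (ρ := R) (by nlinarith)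
      (by linarith [hu.1]) (abs_le.2 ⟨by linarith [hu.1], by linarith [hu.2]⟩) hlap0
    linarith
  have hRΛ : R ^ 2 * Λ = 16 / 9 * c₂ * δ ^ 2 := by simp only [R, Λ]; field_simp
  calc |φ ‖z‖ - (radialLogApprox φ a z).re| ≤ R ^ 2 * (‖a‖ + R) * Λ / (‖a‖ - R) :=
        abs_sub_radialLogApprox_re_le hφ (by linarith) hlap hz
    _ ≤ c₂ := by
        rw [div_le_iff₀ (by linarith), mul_right_comm, hRΛ]
        nlinarith [mul_le_mul_of_nonneg_left (show δ ^ 2 ≤ 1 / 16 by nlinarith) hc₂]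

theorem exists_holomorphic_re_approx {φ : ℝ → ℝ} (hφ : ContDiff ℝ 2 φ)
    (hsub : ∀ r : ℝ, 0 < r → 0 ≤ lapR φ r) {τ : ℂ → ℝ} (hτpos : ∀ z, 0 < τ z) {c₁ c₂ : ℝ}
    (hlip : ∀ z ζ : ℂ, |τ z - τ ζ| ≤ c₁ * ‖z - ζ‖)
    (hbd : ∀ z : ℂ, 1 ≤ ‖z‖ → τ z ^ 2 * lapR φ ‖z‖ ≤ c₂) :
    ∃ C₀, ∀ δ : ℝ, 0 < δ → δ ≤ 1 / 4 → 4 * c₁ * δ ≤ 1 → ∀ a : ℂ, ∃ g : ℂ → ℂ,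
      DiffContOnCl ℂ g (ball a (δ * τ a)) ∧ (g a).re = φ ‖a‖ ∧
      ∀ z ∈ ball a (δ * τ a), |φ ‖z‖ - (g z).re| ≤ C₀ := by
  obtain ⟨B, hB⟩ := (isCompact_Icc (a := 0) (b := 3 + 3 * τ 0)).exists_bound_of_continuousOn
    hφ.continuous.continuousOn
  refine ⟨max c₂ (2 * B), fun δ hδ hδ4 hδc a => ?_⟩
  have hτ0 := hτpos 0
  have hRle : δ * τ a ≤ τ 0 / 4 + ‖a‖ / 4 := by
    have := (abs_le.1 (hlip a 0)).2
    rw [sub_zero] at this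
    nlinarith [norm_nonneg a]
  by_cases hsmall : ‖a‖ < 2 + 2 * τ 0
  · refine ⟨fun _ => φ ‖a‖, diffContOnCl_const, by simp, fun z hz => ?_⟩
    have hz' : ‖z‖ ≤ 3 + 3 * τ 0 := by
      linarith [norm_le_norm_add_norm_sub' z a, (mem_ball_iff_norm.1 hz).le]
    have h1 := hB ‖z‖ ⟨norm_nonneg z, hz'⟩
    have h2 := hB ‖a‖ ⟨norm_nonneg a, by linarith⟩
    rw [norm_eq_abs] at h1 h2
    simp only [Complex.ofReal_re]
    exact (abs_sub _ _).trans (by linarith [le_max_right c₂ (2 * B)])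
  rw [not_lt] at hsmall
  refine ⟨radialLogApprox φ a, (differentiableOn_radialLogApprox φ a).diffContOnCl_ball
    (closedBall_subset_ball (by linarith)), radialLogApprox_self_re φ a, fun z hz => ?_⟩
  exact (abs_sub_radialLogApprox_re_le_of_lipschitz hφ hsub hlip hbd hδ.le hδ4 hδc (hτpos a)
    (by linarith) (by linarith) (ball_subset_closedBall hz)).trans (le_max_left _ _)

end

theorem stmt12_general (φ : ℝ → ℝ) (hφ : ContDiff ℝ 2 φ) (hsub : ∀ r : ℝ, 0 < r → 0 ≤ lapR φ r)
    (τ : ℂ → ℝ) (c₁ c₂ : ℝ) (hτpos : ∀ z, 0 < τ z)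
    (hlip : ∀ z ζ : ℂ, |τ z - τ ζ| ≤ c₁ * ‖z - ζ‖)
    (hbd : ∀ z : ℂ, 1 ≤ ‖z‖ → τ z ^ 2 * lapR φ (‖z‖) ≤ c₂)
    (β p : ℝ) (hp : 0 < p) :
    ∃ M : ℝ, 1 ≤ M ∧ ∀ δ : ℝ, 0 < δ → δ ≤ min 1 c₁⁻¹ / 4 → ∀ a : ℂ, ∀ f : ℂ → ℂ,
      Differentiable ℂ f →
      ‖f a‖ ^ p * Real.exp (-(β * φ (‖a‖))) ≤
        M / (δ ^ 2 * τ a ^ 2) *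
          ∫ z in ball a (δ * τ a),
            ‖f z‖ ^ p * Real.exp (-(β * φ (‖z‖))) := by
  obtain ⟨C₀, hC₀⟩ := exists_holomorphic_re_approx hφ hsub hτpos hlip hbd
  set K := 4 ^ (⌈p⌉₊ / p) / Real.pi * Real.exp (|β| * C₀)
  refine ⟨max 1 K, le_max_left _ _, fun δ hδ hδm a f hf => ?_⟩
  have hδ4 : δ ≤ 1 / 4 := hδm.trans (by gcongr; exact min_le_left _ _)
  have hδc : 4 * c₁ * δ ≤ 1 := by
    rcases le_or_gt c₁ 0 with hc | hc
    · nlinarith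
    · have : δ ≤ c₁⁻¹ / 4 := hδm.trans (by gcongr; exact min_le_right _ _)
      calc 4 * c₁ * δ ≤ 4 * c₁ * (c₁⁻¹ / 4) := by gcongr
        _ = 1 := by field_simp
  obtain ⟨g, hg, hga, hgφ⟩ := hC₀ δ hδ hδ4 hδc a
  have hR : 0 < δ * τ a := mul_pos hδ (hτpos a)
  have hI : 0 ≤ ∫ z in ball a (δ * τ a), ‖f z‖ ^ p * Real.exp (-(β * φ ‖z‖)) :=
    setIntegral_nonneg measurableSet_ball fun z _ => by positivity
  calc ‖f a‖ ^ p * Real.exp (-(β * φ ‖a‖))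
      ≤ 4 ^ (⌈p⌉₊ / p) / (Real.pi * (δ * τ a) ^ 2) * Real.exp (|β| * C₀) *
          ∫ z in ball a (δ * τ a), ‖f z‖ ^ p * Real.exp (-(β * φ ‖z‖)) :=
        hf.diffContOnCl.norm_rpow_mul_exp_le_integral hR hp hg
          (hφ.continuous.comp continuous_norm).continuousOn hga hgφ
    _ = K / (δ ^ 2 * τ a ^ 2) * ∫ z in ball a (δ * τ a), ‖f z‖ ^ p * Real.exp (-(β * φ ‖z‖)) := by
        rw [mul_pow]; ring
    _ ≤ max 1 K / (δ ^ 2 * τ a ^ 2) *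
          ∫ z in ball a (δ * τ a), ‖f z‖ ^ p * Real.exp (-(β * φ ‖z‖)) := by
        gcongr; exact le_max_right _ _

/-- Lemma 2.3: if the radial `C²` function `φ` is subharmonic (`Δφ ≥ 0`), `τ : ℂ → (0,∞)`
is `c₁`-Lipschitz and `τ(z)² Δφ(z) ≤ c₂` for `|z| ≥ 1`, then for every `β ∈ ℝ` and
`0 < p < ∞` there is `M ≥ 1` such that for all `0 < δ ≤ m_τ`, `a ∈ ℂ` and entire `f`:
`|f(a)|^p e^{-βφ(a)} ≤ (M/(δ²τ(a)²)) ∫_{D(a,δτ(a))} |f|^p e^{-βφ} dm`. -/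
theorem stmt12 (φ : ℝ → ℝ) (hφ : ContDiff ℝ 2 φ) (hsub : ∀ r : ℝ, 0 < r → 0 ≤ lapR φ r)
    (τ : ℂ → ℝ) (c₁ c₂ : ℝ) (hc₁ : 0 < c₁) (hc₂ : 0 < c₂) (hτpos : ∀ z, 0 < τ z)
    (hlip : ∀ z ζ : ℂ, |τ z - τ ζ| ≤ c₁ * ‖z - ζ‖)
    (hbd : ∀ z : ℂ, 1 ≤ ‖z‖ → τ z ^ 2 * lapR φ (‖z‖) ≤ c₂)
    (β p : ℝ) (hp : 0 < p) :
    ∃ M : ℝ, 1 ≤ M ∧ ∀ δ : ℝ, 0 < δ → δ ≤ min 1 c₁⁻¹ / 4 → ∀ a : ℂ, ∀ f : ℂ → ℂ,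
      Differentiable ℂ f →
      ‖f a‖ ^ p * Real.exp (-(β * φ (‖a‖))) ≤
        M / (δ ^ 2 * τ a ^ 2) *
          ∫ z in ball a (δ * τ a),
            ‖f z‖ ^ p * Real.exp (-(β * φ (‖z‖))) :=
  stmt12_general φ hφ hsub τ c₁ c₂ hτpos hlip hbd β p hp
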